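/- arXiv:2405.10344 — 3 statements merged into one kernel-verified Lean document; each statement's English description precedes it below -/
import Mathlib

section
/- Let n ≥ 2 be an integer and p, q > 1 reals. There exists a real γ with 0 < γ ≤ (q-1)² such that for all X ≥ 0, ((p-1)² - γ) + (2(p-1)(q-1) - (n-1)(p-q)² - 2γ)X + ((q-1)² - γ)X² ≥ 0, if and only if (n-1)/4 < (p-1)(q-1)/(p-q)² (interpreting the right side as +∞ when p = q). -/
lemma aux_gamma_exists (a b c : ℝ) (ha : 0 < a) (hb : 0 < b) (hS : 0 < a + b - c)
    (hd : c ^ 2 < 4 * a * b) :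
    ∃ γ : ℝ, 0 < γ ∧ γ ≤ b ∧ ∀ X : ℝ, 0 ≤ X →
      0 ≤ (a - γ) + (c - 2 * γ) * X + (b - γ) * X ^ 2 := by
  set γ : ℝ := (4 * a * b - c ^ 2) / (4 * (a + b - c)) with hγ
  have hγ0 : 0 < γ := div_pos (by linarith) (by linarith)
  have hSne : 4 * (a + b - c) ≠ 0 := by positivity
  have hbγ : b - γ = (2 * b - c) ^ 2 / (4 * (a + b - c)) := by
    rw [hγ]; field_simp; ring
  have haγ : a - γ = (2 * a - c) ^ 2 / (4 * (a + b - c)) := by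
    rw [hγ]; field_simp; ring
  have hbγ0 : 0 ≤ b - γ := by rw [hbγ]; positivity
  have haγ0 : 0 ≤ a - γ := by rw [haγ]; positivity
  have hdisc : (c - 2 * γ) ^ 2 = 4 * (a - γ) * (b - γ) := by
    rw [hγ]; field_simp; ring
  refine ⟨γ, hγ0, by linarith, ?_⟩
  intro X hXpos
  by_cases hC : a - γ = 0
  · have hB : c - 2 * γ = 0 := by
      have h0 : (c - 2 * γ) ^ 2 = 0 := by rw [hdisc, hC]; ring
      exact pow_eq_zero_iff (by norm_num) |>.mp h0
    rw [hC, hB]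
    have : 0 ≤ (b - γ) * X ^ 2 := mul_nonneg hbγ0 (sq_nonneg _)
    linarith
  · have hCpos : 0 < a - γ := lt_of_le_of_ne haγ0 (Ne.symm hC)
    nlinarith [sq_nonneg ((c - 2 * γ) * X + 2 * (a - γ)),
      mul_nonneg (mul_nonneg hbγ0 hXpos) hXpos, hdisc, hCpos]

/-- Existence of an admissible γ in condition (φ₂) for the (p,q)-Laplacian
is equivalent to (n-1)/4 < (p-1)(q-1)/(p-q)². -/
theorem pq_gamma_exists_iff (n : ℕ) (hn : 2 ≤ n) (p q : ℝ) (hp : 1 < p) (hq : 1 < q)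
    (hpq : p ≠ q) :
    (∃ γ : ℝ, 0 < γ ∧ γ ≤ (q - 1) ^ 2 ∧ ∀ X : ℝ, 0 ≤ X →
        0 ≤ ((p - 1) ^ 2 - γ) +
            (2 * (p - 1) * (q - 1) - ((n : ℝ) - 1) * (p - q) ^ 2 - 2 * γ) * X +
            ((q - 1) ^ 2 - γ) * X ^ 2) ↔
      ((n : ℝ) - 1) / 4 < (p - 1) * (q - 1) / (p - q) ^ 2 := by
  have hp1 : (0:ℝ) < p - 1 := by linarith
  have hq1 : (0:ℝ) < q - 1 := by linarith
  have hne : p - q ≠ 0 := sub_ne_zero.mpr hpq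
  have he : (0:ℝ) < (p - q) ^ 2 :=
    lt_of_le_of_ne (sq_nonneg _) (Ne.symm (pow_ne_zero 2 hne))
  have hm : (1:ℝ) ≤ (n : ℝ) - 1 := by
    have : (2:ℝ) ≤ (n : ℝ) := by exact_mod_cast hn
    linarith
  set m : ℝ := (n : ℝ) - 1 with hmdef
  rw [div_lt_div_iff₀ (by norm_num) he]
  constructor
  · rintro ⟨γ, hγ0, hγb, hX⟩
    have h := hX ((p - 1) / (q - 1)) (by positivity)
    have h' : 0 ≤ (((p - 1) ^ 2 - γ) +
        (2 * (p - 1) * (q - 1) - m * (p - q) ^ 2 - 2 * γ) * ((p - 1) / (q - 1)) +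
        ((q - 1) ^ 2 - γ) * ((p - 1) / (q - 1)) ^ 2) * (q - 1) ^ 2 :=
      mul_nonneg h (sq_nonneg _)
    have hq1' : q - 1 ≠ 0 := ne_of_gt hq1
    have hid : (((p - 1) ^ 2 - γ) +
        (2 * (p - 1) * (q - 1) - m * (p - q) ^ 2 - 2 * γ) * ((p - 1) / (q - 1)) +
        ((q - 1) ^ 2 - γ) * ((p - 1) / (q - 1)) ^ 2) * (q - 1) ^ 2 =
        2 * (p - 1) ^ 2 * (q - 1) ^ 2 +
        (2 * (p - 1) * (q - 1) - m * (p - q) ^ 2) * ((p - 1) * (q - 1)) -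
        γ * (p + q - 2) ^ 2 := by
      field_simp
      ring
    rw [hid] at h'
    have hs : 0 < (p + q - 2) ^ 2 := pow_pos (by linarith) 2
    have key : 0 < 2 * (p - 1) ^ 2 * (q - 1) ^ 2 +
        (2 * (p - 1) * (q - 1) - m * (p - q) ^ 2) * ((p - 1) * (q - 1)) := by
      linarith [mul_pos hγ0 hs]
    have h4 : 0 < (p - 1) * (q - 1) * (4 * ((p - 1) * (q - 1)) - m * (p - q) ^ 2) := by
      linarith [key]
    have h5 : 0 < 4 * ((p - 1) * (q - 1)) - m * (p - q) ^ 2 := by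
      rcases mul_pos_iff.mp h4 with ⟨_, h⟩ | ⟨h, _⟩
      · exact h
      · exact absurd (mul_pos hp1 hq1) (by linarith)
    linarith
  · intro hlt
    set a : ℝ := (p - 1) ^ 2 with ha
    set b : ℝ := (q - 1) ^ 2 with hb
    set c : ℝ := 2 * (p - 1) * (q - 1) - m * (p - q) ^ 2 with hc
    have hapos : 0 < a := pow_pos hp1 2
    have hbpos : 0 < b := pow_pos hq1 2
    have hSpos : 0 < a + b - c := by
      have hS : a + b - c = ((n : ℝ)) * (p - q) ^ 2 := by
        rw [ha, hb, hc, hmdef]; ring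
      rw [hS]
      have hn0 : (0:ℝ) < (n:ℝ) := by linarith
      positivity
    have hdiscpos : c ^ 2 < 4 * a * b := by
      have h2 : 0 < 2 * (p - 1) * (q - 1) - c := by
        rw [hc]; nlinarith
      have h3 : 0 < 2 * (p - 1) * (q - 1) + c := by
        rw [hc]; nlinarith
      have hfact : 4 * a * b - c ^ 2 =
          (2 * (p - 1) * (q - 1) - c) * (2 * (p - 1) * (q - 1) + c) := by
        rw [ha, hb]; ring
      nlinarith [mul_pos h2 h3]
    exact aux_gamma_exists a b c hapos hbpos hSpos hdiscpos
end

section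
/- Let 1 < p < q and φ(t) = t^(p/2-1) + t^(q/2-1). Then for all t > 0, ((δ_φ(t)+1)²)/(n-1) - 2t δ_φ'(t) ≤ (q-1)²/(n-1), where δ_φ(t) = 2tφ'(t)/φ(t) and n ≥ 2 is an integer. -/
/-!
With `A = t^(p/2-1)` and `B = t^(q/2-1)` one has `δ_φ + 1 = ((p-1)A + (q-1)B)/(A+B)`, a convex
combination of `p - 1` and `q - 1`, so `(δ_φ + 1)² ≤ (q-1)²`. Moreover `2t δ_φ' = (q-p)² AB/(A+B)² ≥ 0`:
the mean exponent `δ_φ` increases with `t`. Dropping `- 2t δ_φ'` gives the bound.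
-/

section RpowAddRpow

variable {a b t : ℝ}

theorem hasDerivAt_rpow_add_rpow (ht : 0 < t) :
    HasDerivAt (fun s : ℝ => s ^ a + s ^ b) (a * t ^ (a - 1) + b * t ^ (b - 1)) t :=
  (Real.hasDerivAt_rpow_const (Or.inl ht.ne')).add (Real.hasDerivAt_rpow_const (Or.inl ht.ne'))

theorem two_mul_deriv_rpow_add_rpow_div (ht : 0 < t) :
    2 * t * deriv (fun s : ℝ => s ^ a + s ^ b) t / (t ^ a + t ^ b) =
      2 * (a * t ^ a + b * t ^ b) / (t ^ a + t ^ b) := by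
  rw [(hasDerivAt_rpow_add_rpow ht).deriv, Real.rpow_sub_one ht.ne', Real.rpow_sub_one ht.ne']
  field_simp

theorem hasDerivAt_exponent_mean (ht : 0 < t) :
    HasDerivAt (fun s : ℝ => 2 * (a * s ^ a + b * s ^ b) / (s ^ a + s ^ b))
      (2 * (a - b) ^ 2 * t ^ a * t ^ b / (t * (t ^ a + t ^ b) ^ 2)) t := by
  have hA := Real.hasDerivAt_rpow_const (p := a) (Or.inl ht.ne')
  have hB := Real.hasDerivAt_rpow_const (p := b) (Or.inl ht.ne')
  have hsum : 0 < t ^ a + t ^ b := by positivity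
  refine ((((hA.const_mul a).add (hB.const_mul b)).const_mul 2).div (hA.add hB)
    hsum.ne').congr_deriv ?_
  simp only [Pi.add_apply]
  rw [Real.rpow_sub_one ht.ne', Real.rpow_sub_one ht.ne']
  field_simp
  ring

theorem deriv_two_mul_deriv_rpow_add_rpow_div_nonneg (ht : 0 < t) :
    0 ≤ deriv (fun s : ℝ =>
      2 * s * deriv (fun r : ℝ => r ^ a + r ^ b) s / (s ^ a + s ^ b)) t := by
  have hδ : (fun s : ℝ => 2 * s * deriv (fun r : ℝ => r ^ a + r ^ b) s / (s ^ a + s ^ b))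
      =ᶠ[nhds t] fun s : ℝ => 2 * (a * s ^ a + b * s ^ b) / (s ^ a + s ^ b) := by
    filter_upwards [Ioi_mem_nhds ht] with s hs
    exact two_mul_deriv_rpow_add_rpow_div hs
  rw [hδ.deriv_eq, (hasDerivAt_exponent_mean ht).deriv]
  positivity

end RpowAddRpow

theorem sq_weighted_mean_le_sq {x y A B : ℝ} (hA : 0 < A) (hB : 0 < B) (hxy : |x| ≤ y) :
    ((x * A + y * B) / (A + B)) ^ 2 ≤ y ^ 2 := by
  obtain ⟨hlow, hup⟩ := abs_le.mp hxy
  apply sq_le_sq'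
  · rw [le_div_iff₀ (by positivity)]
    nlinarith
  · rw [div_le_iff₀ (by positivity)]
    nlinarith

/-- For φ(t) = t^(p/2-1) + t^(q/2-1) with 1 < p < q and n ≥ 2,
one has (δ_φ(t)+1)²/(n-1) - 2t δ_φ'(t) ≤ (q-1)²/(n-1) for all t > 0, where
δ_φ(t) = 2tφ'(t)/φ(t). -/
theorem pq_condition_upper_bound (n : ℕ) (hn : 2 ≤ n) (p q : ℝ) (hp : 1 < p) (hpq : p < q) :
    ∀ t : ℝ, 0 < t →
      ((2 * t * deriv (fun s : ℝ => s ^ (p / 2 - 1) + s ^ (q / 2 - 1)) t /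
            (t ^ (p / 2 - 1) + t ^ (q / 2 - 1)) + 1) ^ 2) / ((n : ℝ) - 1) -
        2 * t * deriv (fun s : ℝ =>
            2 * s * deriv (fun r : ℝ => r ^ (p / 2 - 1) + r ^ (q / 2 - 1)) s /
              (s ^ (p / 2 - 1) + s ^ (q / 2 - 1))) t ≤
      (q - 1) ^ 2 / ((n : ℝ) - 1) := by
  intro t ht
  have hn1 : (0 : ℝ) < (n : ℝ) - 1 := by
    have : (2 : ℝ) ≤ n := by exact_mod_cast hn
    linarith
  have hA : 0 < t ^ (p / 2 - 1) := by positivity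
  have hB : 0 < t ^ (q / 2 - 1) := by positivity
  have hδ_add_one :
      2 * t * deriv (fun s : ℝ => s ^ (p / 2 - 1) + s ^ (q / 2 - 1)) t /
          (t ^ (p / 2 - 1) + t ^ (q / 2 - 1)) + 1 =
        ((p - 1) * t ^ (p / 2 - 1) + (q - 1) * t ^ (q / 2 - 1)) /
          (t ^ (p / 2 - 1) + t ^ (q / 2 - 1)) := by
    rw [two_mul_deriv_rpow_add_rpow_div ht]
    field_simp
    ring
  have hmean := sq_weighted_mean_le_sq hA hB (x := p - 1) (y := q - 1)
    (abs_le.mpr ⟨by linarith, by linarith⟩)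
  have hδ' := deriv_two_mul_deriv_rpow_add_rpow_div_nonneg (a := p / 2 - 1) (b := q / 2 - 1) ht
  rw [hδ_add_one]
  calc _ ≤ (((p - 1) * t ^ (p / 2 - 1) + (q - 1) * t ^ (q / 2 - 1)) /
          (t ^ (p / 2 - 1) + t ^ (q / 2 - 1))) ^ 2 / ((n : ℝ) - 1) :=
        sub_le_self _ (mul_nonneg (by positivity) hδ')
    _ ≤ (q - 1) ^ 2 / ((n : ℝ) - 1) := div_le_div_of_nonneg_right hmean hn1.le
end

section
/- Let r ≥ 1, a_1,...,a_r > 0, reals p_1 < ... < p_r, and φ(t) = Σ_{i=1}^r a_i t^(p_i/2-1) for t > 0. Then for all t > 0, 0 ≤ 2t δ_φ'(t) ≤ (p_r - p_1)²/2, where δ_φ(t) = 2tφ'(t)/φ(t). -/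
/-!
Put `q i = p i / 2 - 1` and `w i = a i * t ^ q i`. Since `t * (d/dt) t ^ q = q * t ^ q`, one gets
`δ_φ(t) = 2 E_w[q]` and `t δ_φ'(t) = 2 Var_w(q)`, where `E_w`, `Var_w` are the mean and variance of
`q` for the probability weights `w / ∑ w`. A variance is nonnegative (Cauchy–Schwarz) and, by
Popoviciu's inequality, at most `((q_r - q_1) / 2) ^ 2 = (p_r - p_1) ^ 2 / 16`.
-/

open Finset Filter

section WeightedVariance

variable {ι : Type*} (s : Finset ι) {w x : ι → ℝ}

theorem sq_sum_mul_le_sum_mul_sum_mul_sq (hw : ∀ i ∈ s, 0 ≤ w i) :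
    (∑ i ∈ s, w i * x i) ^ 2 ≤ (∑ i ∈ s, w i) * ∑ i ∈ s, w i * x i ^ 2 :=
  sum_sq_le_sum_mul_sum_of_sq_le_mul s hw (fun i hi => mul_nonneg (hw i hi) (sq_nonneg _))
    fun i _ => le_of_eq (by ring)

/-- Popoviciu's inequality for a weighted variance. -/
theorem sum_mul_sum_mul_sq_sub_sq_le {m M : ℝ} (hw : ∀ i ∈ s, 0 ≤ w i)
    (hx : ∀ i ∈ s, x i ∈ Set.Icc m M) :
    (∑ i ∈ s, w i) * (∑ i ∈ s, w i * x i ^ 2) - (∑ i ∈ s, w i * x i) ^ 2 ≤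
      ((M - m) / 2) ^ 2 * (∑ i ∈ s, w i) ^ 2 := by
  have hsplit : ∀ i, w i * (x i - m) * (M - x i) =
      (m + M) * (w i * x i) - m * M * w i - w i * x i ^ 2 := fun i => by ring
  have hsum : 0 ≤ (m + M) * ∑ i ∈ s, w i * x i - m * M * ∑ i ∈ s, w i -
      ∑ i ∈ s, w i * x i ^ 2 := by
    simp only [mul_sum, ← sum_sub_distrib, ← hsplit]
    exact sum_nonneg fun i hi =>
      mul_nonneg (mul_nonneg (hw i hi) (sub_nonneg.2 (hx i hi).1)) (sub_nonneg.2 (hx i hi).2)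
  have hW : 0 ≤ ∑ i ∈ s, w i := sum_nonneg hw
  nlinarith [mul_nonneg hW hsum,
    sq_nonneg (∑ i ∈ s, w i * x i - (m + M) / 2 * ∑ i ∈ s, w i)]

end WeightedVariance

section RpowSum

variable {ι : Type*} [Fintype ι] (a q : ι → ℝ) {t : ℝ}

theorem hasDerivAt_sum_mul_rpow (ht : 0 < t) :
    HasDerivAt (fun u => ∑ i, a i * u ^ q i) ((∑ i, a i * t ^ q i * q i) / t) t := by
  have h := HasDerivAt.fun_sum (u := univ) fun i _ =>
    (Real.hasDerivAt_rpow_const (p := q i) (Or.inl ht.ne')).const_mul (a i)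
  refine h.congr_deriv ?_
  rw [sum_div]
  refine sum_congr rfl fun i _ => ?_
  rw [Real.rpow_sub_one ht.ne']
  ring

theorem two_mul_deriv_sum_mul_rpow_div_eventuallyEq (ht : 0 < t) :
    (fun s => 2 * s * deriv (fun u => ∑ i, a i * u ^ q i) s / ∑ i, a i * s ^ q i) =ᶠ[nhds t]
      fun s => 2 * (∑ i, a i * s ^ q i * q i) / ∑ i, a i * s ^ q i := by
  filter_upwards [eventually_gt_nhds ht] with s hs
  rw [(hasDerivAt_sum_mul_rpow a q hs).deriv, mul_assoc, mul_div_cancel₀ _ hs.ne']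

theorem two_mul_mul_deriv_degree_eq (ht : 0 < t) (hφ : ∑ i, a i * t ^ q i ≠ 0) :
    2 * t * deriv (fun s => 2 * s * deriv (fun u => ∑ i, a i * u ^ q i) s /
        ∑ i, a i * s ^ q i) t =
      4 * ((∑ i, a i * t ^ q i) * (∑ i, a i * t ^ q i * q i ^ 2) -
        (∑ i, a i * t ^ q i * q i) ^ 2) / (∑ i, a i * t ^ q i) ^ 2 := by
  have hnum : HasDerivAt (fun u => ∑ i, a i * u ^ q i * q i)
      ((∑ i, a i * t ^ q i * q i ^ 2) / t) t := by
    convert hasDerivAt_sum_mul_rpow (fun i => a i * q i) q ht using 1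
    · funext u
      exact sum_congr rfl fun i _ => by ring
    · congr 1
      exact sum_congr rfl fun i _ => by ring
  have hδ := (hnum.const_mul 2).fun_div (hasDerivAt_sum_mul_rpow a q ht) hφ
  rw [(two_mul_deriv_sum_mul_rpow_div_eventuallyEq a q ht).deriv_eq, hδ.deriv]
  field_simp
  ring

end RpowSum

/-- For φ(t) = Σ aᵢ t^(pᵢ/2-1) with aᵢ > 0 and p₁ < ... < p_r,
one has 0 ≤ 2t δ_φ'(t) ≤ (p_r - p₁)²/2 for all t > 0, where δ_φ(t) = 2tφ'(t)/φ(t). -/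
theorem weighted_p_laplacian_degree_deriv_bounds (r : ℕ) (hr : 1 ≤ r)
    (a p : Fin r → ℝ) (ha : ∀ i, 0 < a i) (hp : StrictMono p) :
    ∀ t : ℝ, 0 < t →
      0 ≤ 2 * t * deriv (fun s : ℝ =>
          2 * s * deriv (fun u : ℝ => ∑ i, a i * u ^ (p i / 2 - 1)) s /
            (∑ i, a i * s ^ (p i / 2 - 1))) t ∧
      2 * t * deriv (fun s : ℝ =>
          2 * s * deriv (fun u : ℝ => ∑ i, a i * u ^ (p i / 2 - 1)) s /
            (∑ i, a i * s ^ (p i / 2 - 1))) t ≤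
        (p ⟨r - 1, by omega⟩ - p ⟨0, by omega⟩) ^ 2 / 2 := by
  intro t ht
  have hw : ∀ i ∈ univ, 0 ≤ a i * t ^ (p i / 2 - 1) := fun i _ => by
    have := ha i; positivity
  have hW : 0 < ∑ i, a i * t ^ (p i / 2 - 1) :=
    sum_pos (fun i _ => by have := ha i; positivity) ⟨⟨0, by omega⟩, mem_univ _⟩
  have hbounds : ∀ i ∈ univ, p i / 2 - 1 ∈
      Set.Icc (p ⟨0, by omega⟩ / 2 - 1) (p ⟨r - 1, by omega⟩ / 2 - 1) := fun i _ =>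
    ⟨by linarith [hp.monotone (Fin.le_def.2 (Nat.zero_le i.val) : (⟨0, by omega⟩ : Fin r) ≤ i)],
     by linarith [hp.monotone (Fin.le_def.2 (Nat.le_sub_one_of_lt i.isLt) : i ≤ ⟨r - 1, by omega⟩)]⟩
  have hCS := sq_sum_mul_le_sum_mul_sum_mul_sq univ (x := fun i => p i / 2 - 1) hw
  have hPop := sum_mul_sum_mul_sq_sub_sq_le univ hw hbounds
  rw [two_mul_mul_deriv_degree_eq a (fun i => p i / 2 - 1) ht hW.ne']
  refine ⟨div_nonneg (by linarith) (sq_nonneg _), ?_⟩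
  rw [div_le_iff₀ (by positivity)]
  nlinarith [sq_nonneg (p ⟨r - 1, by omega⟩ - p ⟨0, by omega⟩), sq_nonneg (∑ i, a i * t ^ (p i / 2 - 1))]
end
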